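/- Let H be a complex Hilbert space and T a bounded operator on H that is power bounded. Let M and N be closed subspaces of H, each invariant under T, such that the closed linear span of M ∪ N equals H, the restriction T|_M is similar to an isometry, and T|_N is stable, i.e. ‖T^n y‖ → 0 as n → ∞ for every y ∈ N. Then the map X : M ⊕₂ N → H defined by X(x, y) = x + y is a continuous linear equivalence (bounded with bounded inverse), and X ∘ (T|_M ⊕ T|_N) = T ∘ X; in particular, T is similar to the direct sum T|_M ⊕ T|_N. -/

import Mathlib

noncomputable section

def SimilarToIsometry {M : Type*} [NormedAddCommGroup M] [NormedSpace ℂ M] (S : M →L[ℂ] M) : Prop :=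
  ∃ (W : Type) (_ : NormedAddCommGroup W) (_ : InnerProductSpace ℂ W) (_ : CompleteSpace W)
    (J : W →L[ℂ] W) (Y : M ≃L[ℂ] W),
    (∀ w : W, ‖J w‖ = ‖w‖) ∧ ∀ x : M, Y (S x) = J (Y x)

/-!
If `Y` conjugates `T|_M` to an isometry, then `‖x‖ ≤ ‖Y⁻¹‖ ‖Y‖ ‖Tⁿ x‖` for `x ∈ M` and all `n`.
For `y ∈ N` we have `‖Tⁿ x‖ ≤ C ‖x + y‖ + ‖Tⁿ y‖`, and the last term tends to `0` by stability,
so `‖x‖ ≤ ‖Y⁻¹‖ ‖Y‖ C ‖x + y‖`. Hence `(x, y) ↦ x + y` is bounded below on `M ⊕₂ N`: it is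
injective with closed range, and that range `M + N` is dense, so it is a continuous linear
equivalence by the open mapping theorem.
-/

open Filter Topology Function

namespace SimilarToIsometry

variable {M : Type*} [NormedAddCommGroup M] [NormedSpace ℂ M] {S : M →L[ℂ] M}

theorem exists_norm_le_mul_norm_pow (h : SimilarToIsometry S) :
    ∃ c, 0 ≤ c ∧ ∀ (n : ℕ) (x : M), ‖x‖ ≤ c * ‖(S ^ n) x‖ := by
  obtain ⟨W, _, _, _, J, Y, hJ, hY⟩ := h
  have hJn : ∀ (n : ℕ) (w : W), ‖J^[n] w‖ = ‖w‖ := by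
    intro n
    induction n with
    | zero => simp
    | succ n ih => intro w; rw [iterate_succ_apply', hJ, ih]
  have hYn (n : ℕ) : Semiconj Y S^[n] J^[n] := Semiconj.iterate_right (f := Y) hY n
  refine ⟨‖(Y.symm : W →L[ℂ] M)‖ * ‖(Y : M →L[ℂ] W)‖, by positivity, fun n x => ?_⟩
  calc ‖x‖ = ‖Y.symm (Y x)‖ := by rw [Y.symm_apply_apply]
    _ ≤ ‖(Y.symm : W →L[ℂ] M)‖ * ‖Y x‖ := (Y.symm : W →L[ℂ] M).le_opNorm _
    _ = ‖(Y.symm : W →L[ℂ] M)‖ * ‖Y ((S ^ n) x)‖ := by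
      rw [FunLike.coe_pow_eq_iterate, hYn n x, hJn]
    _ ≤ ‖(Y.symm : W →L[ℂ] M)‖ * (‖(Y : M →L[ℂ] W)‖ * ‖(S ^ n) x‖) := by
      gcongr; exact (Y : M →L[ℂ] W).le_opNorm _
    _ = _ := by ring

end SimilarToIsometry

theorem ContinuousLinearMap.codRestrict_comp_subtypeL_pow_apply {R E : Type*} [Semiring R]
    [TopologicalSpace E] [AddCommMonoid E] [Module R E] (T : E →L[R] E) (p : Submodule R E)
    (hp : ∀ x : p, T x ∈ p) (n : ℕ) (x : p) :
    (((T.comp p.subtypeL).codRestrict p hp ^ n) x : E) = (T ^ n) x := by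
  have hsemi : Semiconj p.subtype ((T.comp p.subtypeL).codRestrict p hp) T := fun _ => rfl
  rw [FunLike.coe_pow_eq_iterate, FunLike.coe_pow_eq_iterate]
  exact hsemi.iterate_right n x

theorem norm_le_mul_mul_norm_add_of_tendsto {𝕜 E F : Type*} [NontriviallyNormedField 𝕜]
    [NormedAddCommGroup E] [NormedSpace 𝕜 E] [NormedAddCommGroup F] [NormedSpace 𝕜 F]
    {A : ℕ → E →L[𝕜] F} {C c : ℝ} {x y : E} (hA : ∀ n, ‖A n‖ ≤ C) (hc : 0 ≤ c)
    (hx : ∀ n, ‖x‖ ≤ c * ‖A n x‖) (hy : Tendsto (fun n => ‖A n y‖) atTop (𝓝 0)) :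
    ‖x‖ ≤ c * C * ‖x + y‖ := by
  have hn (n : ℕ) : ‖x‖ ≤ c * (C * ‖x + y‖ + ‖A n y‖) := by
    refine (hx n).trans (mul_le_mul_of_nonneg_left ?_ hc)
    calc ‖A n x‖ = ‖A n (x + y) - A n y‖ := by rw [map_add, add_sub_cancel_right]
      _ ≤ ‖A n (x + y)‖ + ‖A n y‖ := norm_sub_le _ _
      _ ≤ C * ‖x + y‖ + ‖A n y‖ := by
        gcongr; exact (A n).le_of_opNorm_le (hA n) _
  have hlim : Tendsto (fun n => c * (C * ‖x + y‖ + ‖A n y‖)) atTop (𝓝 (c * C * ‖x + y‖)) := by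
    simpa [mul_assoc] using (hy.const_add (C * ‖x + y‖)).const_mul c
  exact ge_of_tendsto' hlim hn

namespace Submodule

variable {𝕜 E : Type*} [NontriviallyNormedField 𝕜] [NormedAddCommGroup E] [NormedSpace 𝕜 E]

def l2Sum (M N : Submodule 𝕜 E) : WithLp 2 (M × N) →L[𝕜] E :=
  (M.subtypeL.coprod N.subtypeL).comp
    (WithLp.prodContinuousLinearEquiv 2 𝕜 M N).toContinuousLinearMap

variable {M N : Submodule 𝕜 E}

@[simp]
theorem l2Sum_apply (v : WithLp 2 (M × N)) : M.l2Sum N v = (v.fst : E) + v.snd := rfl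

theorem range_l2Sum : (M.l2Sum N).range = M ⊔ N := by
  ext z
  simp only [LinearMap.mem_range, ContinuousLinearMap.coe_coe, l2Sum_apply, mem_sup]
  constructor
  · rintro ⟨v, rfl⟩
    exact ⟨_, v.fst.2, _, v.snd.2, rfl⟩
  · rintro ⟨x, hx, y, hy, rfl⟩
    exact ⟨WithLp.toLp 2 (⟨x, hx⟩, ⟨y, hy⟩), rfl⟩

theorem norm_le_mul_norm_l2Sum {K : ℝ} (h : ∀ x ∈ M, ∀ y ∈ N, ‖x‖ ≤ K * ‖x + y‖)
    (v : WithLp 2 (M × N)) : ‖v‖ ≤ (1 + 2 * K) * ‖M.l2Sum N v‖ := by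
  have hfst : ‖v.fst‖ ≤ K * ‖M.l2Sum N v‖ := h _ v.fst.2 _ v.snd.2
  have hsnd : ‖v.snd‖ ≤ ‖M.l2Sum N v‖ + ‖v.fst‖ := by
    simpa using norm_sub_le (M.l2Sum N v) (v.fst : E)
  have hv : ‖v‖ ≤ ‖v.fst‖ + ‖v.snd‖ := by
    have hv2 := WithLp.prod_norm_sq_eq_of_L2 v
    refine (pow_le_pow_iff_left₀ (norm_nonneg _) (by positivity) two_ne_zero).mp ?_
    nlinarith [norm_nonneg v.fst, norm_nonneg v.snd]
  linarith

theorem bijective_l2Sum [CompleteSpace E] (hM : IsClosed (M : Set E)) (hN : IsClosed (N : Set E))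
    {K : ℝ} (h : ∀ x ∈ M, ∀ y ∈ N, ‖x‖ ≤ K * ‖x + y‖) (hspan : (M ⊔ N).topologicalClosure = ⊤) :
    Bijective (M.l2Sum N) := by
  have : CompleteSpace M := hM.completeSpace_coe
  have : CompleteSpace N := hN.completeSpace_coe
  refine (ContinuousLinearMap.bijective_iff_dense_range_and_antilipschitz _).2
    ⟨by rw [range_l2Sum, hspan], (1 + 2 * K).toNNReal,
      (M.l2Sum N).antilipschitz_of_bound fun v => ?_⟩
  exact (norm_le_mul_norm_l2Sum h v).trans (by gcongr; exact Real.le_coe_toNNReal _)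

end Submodule

theorem similar_to_direct_sum_of_invariant_subspaces
    {H : Type} [NormedAddCommGroup H] [InnerProductSpace ℂ H] [CompleteSpace H]
    (T : H →L[ℂ] H) (hpow : ∃ C : ℝ, ∀ n : ℕ, ‖T ^ n‖ ≤ C)
    (M N : Submodule ℂ H) (hMc : IsClosed (M : Set H)) (hNc : IsClosed (N : Set H))
    (hMinv : ∀ x ∈ M, T x ∈ M) (hNinv : ∀ y ∈ N, T y ∈ N)
    (hspan : (M ⊔ N).topologicalClosure = ⊤)
    (hiso : SimilarToIsometry
      (ContinuousLinearMap.codRestrict (T.comp M.subtypeL) M (fun x => hMinv x x.2)))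
    (hstable : ∀ y ∈ N, Filter.Tendsto (fun n : ℕ => ‖(T ^ n) y‖) Filter.atTop (nhds 0)) :
    ∃ X : WithLp 2 (M × N) ≃L[ℂ] H,
      (∀ (x : M) (y : N),
        X ((WithLp.equiv 2 (M × N)).symm (x, y)) = (x : H) + (y : H)) ∧
      (∀ (x : M) (y : N),
        T (X ((WithLp.equiv 2 (M × N)).symm (x, y)))
          = X ((WithLp.equiv 2 (M × N)).symm
              (⟨T x, hMinv x x.2⟩, ⟨T y, hNinv y y.2⟩))) := by
  obtain ⟨C, hC⟩ := hpow
  obtain ⟨c, hc, hlow⟩ := hiso.exists_norm_le_mul_norm_pow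
  have hbound : ∀ x ∈ M, ∀ y ∈ N, ‖x‖ ≤ c * C * ‖x + y‖ := fun x hx y hy =>
    norm_le_mul_mul_norm_add_of_tendsto hC hc (fun n => (hlow n ⟨x, hx⟩).trans_eq <|
      congrArg (c * ‖·‖) (T.codRestrict_comp_subtypeL_pow_apply M _ n ⟨x, hx⟩))
      (hstable y hy)
  have hbij := Submodule.bijective_l2Sum hMc hNc hbound hspan
  refine ⟨.ofBijective (M.l2Sum N) (LinearMap.ker_eq_bot.2 hbij.1)
    (LinearMap.range_eq_top.2 hbij.2), fun x y => rfl, fun x y => map_add T (x : H) y⟩
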